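/- In the hierarchy of coding models, the quantum capacities are ordered: Q_I(Φ) = I(Φ) ≤ Q_II(Φ) = (log d + I(Φ))/2 ≤ Q_IV(Φ) = J(Φ)/2, where J(Φ) = max_ρ [H(ρ) + I_c(ρ,Φ)]. -/

import Mathlib

open Matrix BigOperators Kronecker Complex
open scoped ComplexOrder

set_option linter.unusedSectionVars false
set_option linter.unusedVariables false
noncomputable section

/-- Apply a real function to a Hermitian matrix via the spectral theorem. -/
def matFun {n : Type*} [Fintype n] [DecidableEq n] (f : ℝ → ℝ) (A : Matrix n n ℂ) :
    Matrix n n ℂ :=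
  if hA : A.IsHermitian then
    (hA.eigenvectorUnitary : Matrix n n ℂ) *
      Matrix.diagonal (fun i => (f (hA.eigenvalues i) : ℂ)) *
      star (hA.eigenvectorUnitary : Matrix n n ℂ)
  else 0

/-- Matrix logarithm (spectral). -/
def matLog {n : Type*} [Fintype n] [DecidableEq n] (A : Matrix n n ℂ) : Matrix n n ℂ :=
  matFun Real.log A

/-- Von Neumann entropy `H(ρ) = -tr(ρ log ρ)`. -/
def vnEntropy {n : Type*} [Fintype n] [DecidableEq n] (ρ : Matrix n n ℂ) : ℝ :=
  -(ρ * matLog ρ).trace.re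

/-- Quantum relative entropy `R(ρ‖σ) = tr(ρ log ρ) - tr(ρ log σ)`. -/
def relEnt {n : Type*} [Fintype n] [DecidableEq n] (ρ σ : Matrix n n ℂ) : ℝ :=
  (ρ * matLog ρ).trace.re - (ρ * matLog σ).trace.re

/-- A density matrix: positive semidefinite with unit trace. -/
def IsDensity {n : Type*} [Fintype n] [DecidableEq n] (ρ : Matrix n n ℂ) : Prop :=
  ρ.PosSemidef ∧ ρ.trace = 1

/-- A quantum channel presented by a (finite) family of Kraus operators. -/
structure QChannel (n m : Type*) [Fintype n] [DecidableEq n] [Fintype m] [DecidableEq m] where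
  k : ℕ
  K : Fin k → Matrix m n ℂ
  tp : ∑ i, (K i)ᴴ * K i = 1

/-- The action of the channel: `Φ(ρ) = ∑ i, K i ρ (K i)†`. -/
def QChannel.app {n m : Type*} [Fintype n] [DecidableEq n] [Fintype m] [DecidableEq m]
    (Φ : QChannel n m) (ρ : Matrix n n ℂ) : Matrix m m ℂ :=
  ∑ i, Φ.K i * ρ * (Φ.K i)ᴴ

/-- Partial trace over the left (first) tensor factor. -/
def ptraceLeft {e n : Type*} [Fintype e] (M : Matrix (e × n) (e × n) ℂ) : Matrix n n ℂ :=
  Matrix.of fun i j => ∑ a, M (a, i) (a, j)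

/-- Partial trace over the right (second) tensor factor. -/
def ptraceRight {n e : Type*} [Fintype e] (M : Matrix (n × e) (n × e) ℂ) : Matrix n n ℂ :=
  Matrix.of fun i j => ∑ a, M (i, a) (j, a)

/-- The maximally entangled state `|ω⟩⟨ω|`, `|ω⟩ = (1/√d) ∑ i |ii⟩`. -/
def maxEnt (n : Type*) [Fintype n] [DecidableEq n] : Matrix (n × n) (n × n) ℂ :=
  Matrix.of fun p q =>
    if p.1 = p.2 ∧ q.1 = q.2 then (1 : ℂ) / (Fintype.card n : ℂ) else 0

/-- The channel tensored with the identity, `(Φ ⊗ id)(M)`. -/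
def QChannel.tensorId {n m : Type*} [Fintype n] [DecidableEq n] [Fintype m] [DecidableEq m]
    (Φ : QChannel n m) {e : Type*} [Fintype e] [DecidableEq e]
    (M : Matrix (n × e) (n × e) ℂ) : Matrix (m × e) (m × e) ℂ :=
  ∑ i, (Φ.K i ⊗ₖ (1 : Matrix e e ℂ)) * M * (Φ.K i ⊗ₖ (1 : Matrix e e ℂ))ᴴ

/-- The Choi state `ω_Φ = (Φ ⊗ id)(ω)`. -/
def QChannel.choi {n m : Type*} [Fintype n] [DecidableEq n] [Fintype m] [DecidableEq m]
    (Φ : QChannel n m) : Matrix (m × n) (m × n) ℂ :=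
  Φ.tensorId (maxEnt n)

/-- `φ` is a purification of `ρ` (reduced state on the first factor is `ρ`). -/
def Purifies {n e : Type*} [Fintype e] (φ : n × e → ℂ) (ρ : Matrix n n ℂ) : Prop :=
  ptraceRight (Matrix.vecMulVec φ (star φ)) = ρ

/-- Coherent information `I_c(ρ,Φ)` computed with the purification `φ` of `ρ`. -/
def cohInfo {n m : Type*} [Fintype n] [DecidableEq n] [Fintype m] [DecidableEq m]
    (Φ : QChannel n m) {r : Type*} [Fintype r] [DecidableEq r]
    (ρ : Matrix n n ℂ) (φ : n × r → ℂ) : ℝ :=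
  vnEntropy (Φ.app ρ) - vnEntropy (Φ.tensorId (Matrix.vecMulVec φ (star φ)))

/-- Coherent information at the maximally mixed input, `I(Φ) = H(Φ(π)) − H(ω_Φ)`. -/
def Ibar {n : Type*} [Fintype n] [DecidableEq n] (Φ : QChannel n n) : ℝ :=
  vnEntropy (Φ.app (((Fintype.card n : ℂ))⁻¹ • 1)) - vnEntropy Φ.choi

/-- Spectral square root of a Hermitian matrix. -/
def msqrt {n : Type*} [Fintype n] [DecidableEq n] (A : Matrix n n ℂ) : Matrix n n ℂ :=
  matFun Real.sqrt A

/-- Trace norm `‖A‖₁ = tr √(A†A)`. -/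
def traceNorm {n m : Type*} [Fintype n] [DecidableEq n] [Fintype m] [DecidableEq m]
    (A : Matrix n m ℂ) : ℝ :=
  (msqrt (Aᴴ * A)).trace.re

/-- Fidelity `F(ρ,σ) = ‖√ρ√σ‖₁²`. -/
def fidelity {n : Type*} [Fintype n] [DecidableEq n] (ρ σ : Matrix n n ℂ) : ℝ :=
  (traceNorm (msqrt ρ * msqrt σ)) ^ 2


/-! ### Auxiliary lemmas -/

section Aux

variable {n m e : Type*} [Fintype n] [DecidableEq n] [Fintype m] [DecidableEq m]
  [Fintype e] [DecidableEq e]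

lemma vnEntropy_eq_sum {A : Matrix n n ℂ} (hA : A.IsHermitian) :
    vnEntropy A = ∑ i, Real.negMulLog (hA.eigenvalues i) := by
  have hU1 : (star (hA.eigenvectorUnitary : Matrix n n ℂ)) *
      (hA.eigenvectorUnitary : Matrix n n ℂ) = 1 :=
    Matrix.mem_unitaryGroup_iff'.mp hA.eigenvectorUnitary.2
  have hlog : matLog A = (hA.eigenvectorUnitary : Matrix n n ℂ) *
      Matrix.diagonal (fun i => (Real.log (hA.eigenvalues i) : ℂ)) *
      star (hA.eigenvectorUnitary : Matrix n n ℂ) := by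
    rw [matLog, matFun, dif_pos hA]
  have hmul : A * matLog A = (hA.eigenvectorUnitary : Matrix n n ℂ) *
      (Matrix.diagonal (RCLike.ofReal ∘ hA.eigenvalues) *
        Matrix.diagonal (fun i => (Real.log (hA.eigenvalues i) : ℂ))) *
      star (hA.eigenvectorUnitary : Matrix n n ℂ) := by
    rw [hlog]
    nth_rewrite 1 [hA.spectral_theorem]
    rw [Unitary.conjStarAlgAut_apply]
    simp only [Matrix.mul_assoc]
    rw [← Matrix.mul_assoc (star (hA.eigenvectorUnitary : Matrix n n ℂ)), hU1, Matrix.one_mul]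
  have htr : (A * matLog A).trace
      = ∑ i, ((hA.eigenvalues i : ℂ) * (Real.log (hA.eigenvalues i) : ℂ)) := by
    rw [hmul, Matrix.trace_mul_cycle, ← Matrix.mul_assoc, hU1, Matrix.one_mul,
      Matrix.diagonal_mul_diagonal, Matrix.trace_diagonal]
    rfl
  rw [vnEntropy, htr, Complex.re_sum, ← Finset.sum_neg_distrib]
  refine Finset.sum_congr rfl fun i _ => ?_
  rw [← Complex.ofReal_mul]
  simp [Real.negMulLog]

lemma trace_eq_sum_eig {A : Matrix n n ℂ} (hA : A.IsHermitian) :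
    A.trace = ∑ i, (hA.eigenvalues i : ℂ) := by
  have hU1 : (star (hA.eigenvectorUnitary : Matrix n n ℂ)) *
      (hA.eigenvectorUnitary : Matrix n n ℂ) = 1 :=
    Matrix.mem_unitaryGroup_iff'.mp hA.eigenvectorUnitary.2
  nth_rewrite 1 [hA.spectral_theorem]
  rw [Unitary.conjStarAlgAut_apply]
  rw [Matrix.trace_mul_cycle, hU1, Matrix.one_mul, Matrix.trace_diagonal]
  rfl

lemma sum_eig_eq_one {A : Matrix n n ℂ} (hA : A.IsHermitian) (ht : A.trace = 1) :
    ∑ i, hA.eigenvalues i = 1 := by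
  have h := trace_eq_sum_eig hA
  rw [ht] at h
  have h2 : ((∑ i, hA.eigenvalues i : ℝ) : ℂ) = 1 := by push_cast; rw [← h]
  exact_mod_cast h2

lemma sum_negMulLog_le_log_card (w : n → ℝ) (h0 : ∀ i, 0 ≤ w i) (h1 : ∑ i, w i = 1) :
    ∑ i, Real.negMulLog (w i) ≤ Real.log (Fintype.card n) := by
  classical
  set t : Finset n := Finset.univ.filter (fun i => w i ≠ 0) with ht
  have hsum : ∑ i ∈ t, w i = 1 := by
    rw [ht, Finset.sum_filter_ne_zero]; exact h1
  have htne : t.Nonempty := by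
    by_contra h
    rw [Finset.not_nonempty_iff_eq_empty] at h
    rw [h, Finset.sum_empty] at hsum; norm_num at hsum
  have hpos : ∀ i ∈ t, 0 < w i := by
    intro i hi
    rcases (h0 i).lt_or_eq with h | h
    · exact h
    · exact absurd h.symm (Finset.mem_filter.mp hi).2
  have jensen := (strictConcaveOn_log_Ioi.concaveOn).le_map_sum
    (t := t) (w := w) (p := fun i => (w i)⁻¹)
    (fun i _ => h0 i) hsum
    (fun i hi => Set.mem_Ioi.mpr (inv_pos.mpr (hpos i hi)))
  have hrhs : ∑ i ∈ t, w i • (w i)⁻¹ = (t.card : ℝ) := by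
    rw [Finset.sum_congr rfl (fun i hi => by
      rw [smul_eq_mul, mul_inv_cancel₀ (hpos i hi).ne'])]
    simp
  rw [hrhs] at jensen
  have hlhs : ∑ i, Real.negMulLog (w i) = ∑ i ∈ t, w i • Real.log (w i)⁻¹ := by
    rw [← Finset.sum_subset (Finset.subset_univ t) (fun i _ hi => by
      have hw : w i = 0 := by simpa [ht] using hi
      simp [Real.negMulLog, hw])]
    refine Finset.sum_congr rfl fun i hi => ?_
    rw [smul_eq_mul, Real.log_inv, Real.negMulLog]
    ring
  rw [hlhs]
  refine jensen.trans (Real.log_le_log (by exact_mod_cast Finset.card_pos.mpr htne) ?_)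
  exact_mod_cast Finset.card_le_univ t

lemma vnEntropy_nonneg {A : Matrix n n ℂ} (hA : A.PosSemidef) (ht : A.trace = 1) :
    0 ≤ vnEntropy A := by
  rw [vnEntropy_eq_sum hA.1]
  refine Finset.sum_nonneg fun i _ => Real.negMulLog_nonneg (hA.eigenvalues_nonneg i) ?_
  calc hA.1.eigenvalues i ≤ ∑ j, hA.1.eigenvalues j :=
        Finset.single_le_sum (fun j _ => hA.eigenvalues_nonneg j) (Finset.mem_univ i)
    _ = 1 := sum_eig_eq_one hA.1 ht

lemma vnEntropy_le_log_card {A : Matrix n n ℂ} (hA : A.PosSemidef) (ht : A.trace = 1) :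
    vnEntropy A ≤ Real.log (Fintype.card n) := by
  rw [vnEntropy_eq_sum hA.1]
  exact sum_negMulLog_le_log_card _ hA.eigenvalues_nonneg (sum_eig_eq_one hA.1 ht)

lemma posSemidef_add {A B : Matrix n n ℂ} (hA : A.PosSemidef) (hB : B.PosSemidef) :
    (A + B).PosSemidef :=
  posSemidef_iff_dotProduct_mulVec.mpr ⟨hA.1.add hB.1, fun x => by
    rw [Matrix.add_mulVec, dotProduct_add]
    exact add_nonneg (hA.dotProduct_mulVec_nonneg x) (hB.dotProduct_mulVec_nonneg x)⟩

lemma posSemidef_sum {k : ℕ} (M : Fin k → Matrix n n ℂ) (h : ∀ i, (M i).PosSemidef) :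
    (∑ i, M i).PosSemidef := by
  classical
  refine Finset.sum_induction M _ (fun a b ha hb => posSemidef_add ha hb)
    Matrix.PosSemidef.zero (fun i _ => h i)

lemma posSemidef_vecMulVec (φ : n → ℂ) : (Matrix.vecMulVec φ (star φ)).PosSemidef := by
  rw [posSemidef_iff_dotProduct_mulVec]
  constructor
  · ext i j
    simp [Matrix.conjTranspose_apply, Matrix.vecMulVec_apply, mul_comm]
  · intro x
    have h : (Matrix.vecMulVec φ (star φ)) *ᵥ x = (star φ ⬝ᵥ x) • φ := by
      ext i
      simp [Matrix.mulVec, Matrix.vecMulVec_apply, dotProduct, Finset.mul_sum,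
        mul_comm, mul_left_comm]
    rw [h, dotProduct_smul]
    have h2 : star x ⬝ᵥ φ = star (star φ ⬝ᵥ x) := by
      simp [dotProduct, mul_comm]
    rw [smul_eq_mul, h2]
    exact mul_star_self_nonneg _
end Aux

section Aux2
variable {n m e : Type*} [Fintype n] [DecidableEq n] [Fintype m] [DecidableEq m]
  [Fintype e] [DecidableEq e]

lemma kronecker_conjTranspose' (A : Matrix m n ℂ) (B : Matrix e e ℂ) :
    (A ⊗ₖ B)ᴴ = Aᴴ ⊗ₖ Bᴴ := by
  ext ⟨i, j⟩ ⟨k, l⟩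
  simp [Matrix.conjTranspose_apply, star_mul']

lemma sum_kronecker_one {k : ℕ} (A : Fin k → Matrix n n ℂ) :
    ((∑ i, A i) ⊗ₖ (1 : Matrix e e ℂ)) = ∑ i, (A i ⊗ₖ (1 : Matrix e e ℂ)) := by
  ext ⟨i, j⟩ ⟨k', l⟩
  simp [Matrix.sum_apply, Finset.sum_mul]

lemma trace_app (Φ : QChannel n m) (ρ : Matrix n n ℂ) : (Φ.app ρ).trace = ρ.trace := by
  rw [QChannel.app, Matrix.trace_sum]
  calc ∑ i, (Φ.K i * ρ * (Φ.K i)ᴴ).trace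
      = ∑ i, ((Φ.K i)ᴴ * Φ.K i * ρ).trace := by
        exact Finset.sum_congr rfl fun i _ => Matrix.trace_mul_cycle _ _ _
    _ = ((∑ i, (Φ.K i)ᴴ * Φ.K i) * ρ).trace := by rw [Finset.sum_mul, Matrix.trace_sum]
    _ = ρ.trace := by rw [Φ.tp, Matrix.one_mul]

lemma posSemidef_app (Φ : QChannel n m) {ρ : Matrix n n ℂ} (hρ : ρ.PosSemidef) :
    (Φ.app ρ).PosSemidef :=
  posSemidef_sum _ fun i => hρ.mul_mul_conjTranspose_same (Φ.K i)

lemma trace_tensorId (Φ : QChannel n m) (M : Matrix (n × e) (n × e) ℂ) :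
    (Φ.tensorId M).trace = M.trace := by
  rw [QChannel.tensorId, Matrix.trace_sum]
  calc ∑ i, ((Φ.K i ⊗ₖ (1 : Matrix e e ℂ)) * M * (Φ.K i ⊗ₖ (1 : Matrix e e ℂ))ᴴ).trace
      = ∑ i, ((((Φ.K i)ᴴ * Φ.K i) ⊗ₖ (1 : Matrix e e ℂ)) * M).trace := by
        refine Finset.sum_congr rfl fun i _ => ?_
        rw [Matrix.trace_mul_cycle, kronecker_conjTranspose', Matrix.conjTranspose_one,
          ← Matrix.mul_kronecker_mul, Matrix.one_mul]
    _ = (((∑ i, (Φ.K i)ᴴ * Φ.K i) ⊗ₖ (1 : Matrix e e ℂ)) * M).trace := by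
        rw [sum_kronecker_one, Finset.sum_mul, Matrix.trace_sum]
    _ = M.trace := by rw [Φ.tp, Matrix.one_kronecker_one, Matrix.one_mul]

lemma posSemidef_tensorId (Φ : QChannel n m) {M : Matrix (n × e) (n × e) ℂ}
    (hM : M.PosSemidef) : (Φ.tensorId M).PosSemidef :=
  posSemidef_sum _ fun i => hM.mul_mul_conjTranspose_same _

lemma trace_ptraceRight (M : Matrix (n × e) (n × e) ℂ) :
    (ptraceRight M).trace = M.trace := by
  rw [Matrix.trace, Matrix.trace]
  rw [Fintype.sum_prod_type]
  rfl
end Aux2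

section Aux3
variable {n : Type*} [Fintype n] [DecidableEq n]

lemma isHermitian_real_smul_one (c : ℝ) :
    (((c : ℂ)) • (1 : Matrix n n ℂ)).IsHermitian := by
  unfold Matrix.IsHermitian
  rw [Matrix.conjTranspose_smul, Matrix.conjTranspose_one]
  simp [Complex.conj_ofReal]

lemma eig_real_smul_one (c : ℝ) (hA : (((c : ℂ)) • (1 : Matrix n n ℂ)).IsHermitian) (i : n) :
    hA.eigenvalues i = c := by
  have hU1 : (star (hA.eigenvectorUnitary : Matrix n n ℂ)) *
      (hA.eigenvectorUnitary : Matrix n n ℂ) = 1 :=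
    Matrix.mem_unitaryGroup_iff'.mp hA.eigenvectorUnitary.2
  have h := hA.spectral_theorem
  rw [Unitary.conjStarAlgAut_apply] at h
  have hD : Matrix.diagonal (RCLike.ofReal ∘ hA.eigenvalues) =
      ((c : ℂ)) • (1 : Matrix n n ℂ) := by
    calc Matrix.diagonal (RCLike.ofReal ∘ hA.eigenvalues)
        = (star (hA.eigenvectorUnitary : Matrix n n ℂ) * (hA.eigenvectorUnitary : Matrix n n ℂ)) *
            Matrix.diagonal (RCLike.ofReal ∘ hA.eigenvalues) *
            (star (hA.eigenvectorUnitary : Matrix n n ℂ) * (hA.eigenvectorUnitary : Matrix n n ℂ)) := by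
          rw [hU1, Matrix.one_mul, Matrix.mul_one]
      _ = (star (hA.eigenvectorUnitary : Matrix n n ℂ)) *
            ((hA.eigenvectorUnitary : Matrix n n ℂ) *
              Matrix.diagonal (RCLike.ofReal ∘ hA.eigenvalues) *
              (star (hA.eigenvectorUnitary : Matrix n n ℂ))) *
            (hA.eigenvectorUnitary : Matrix n n ℂ) := by
          simp only [Matrix.mul_assoc]
      _ = (star (hA.eigenvectorUnitary : Matrix n n ℂ)) * (((c : ℂ)) • (1 : Matrix n n ℂ)) *
            (hA.eigenvectorUnitary : Matrix n n ℂ) := by rw [← h]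
      _ = ((c : ℂ)) • (1 : Matrix n n ℂ) := by
          rw [Matrix.mul_smul, Matrix.mul_one, Matrix.smul_mul, hU1]
  have h3 : ((hA.eigenvalues i : ℝ) : ℂ) = (c : ℂ) := by
    have h4 := congrArg (fun M : Matrix n n ℂ => M i i) hD
    simpa [Matrix.diagonal_apply_eq, Matrix.smul_apply, Matrix.one_apply_eq] using h4
  exact_mod_cast h3

lemma vnEntropy_pi [Nonempty n] :
    vnEntropy ((((Fintype.card n : ℂ)))⁻¹ • (1 : Matrix n n ℂ)) =
      Real.log (Fintype.card n) := by
  have hd : (0 : ℝ) < Fintype.card n := by exact_mod_cast Fintype.card_pos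
  have hcast : ((Fintype.card n : ℂ))⁻¹ = ((((Fintype.card n : ℝ))⁻¹ : ℝ) : ℂ) := by
    push_cast; ring
  rw [hcast, vnEntropy_eq_sum (isHermitian_real_smul_one _)]
  rw [Finset.sum_congr rfl (fun i _ => by
    rw [eig_real_smul_one ((Fintype.card n : ℝ))⁻¹ _ i])]
  rw [Finset.sum_const, Finset.card_univ, nsmul_eq_mul]
  rw [Real.negMulLog, Real.log_inv]
  field_simp

def entVec (n : Type*) [Fintype n] [DecidableEq n] : n × n → ℂ :=
  fun p => if p.1 = p.2 then (((Real.sqrt (Fintype.card n))⁻¹ : ℝ) : ℂ) else 0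

lemma vecMulVec_entVec [Nonempty n] :
    Matrix.vecMulVec (entVec n) (star (entVec n)) = maxEnt n := by
  have hd : (0 : ℝ) < Fintype.card n := by exact_mod_cast Fintype.card_pos
  ext ⟨i, j⟩ ⟨k, l⟩
  simp only [Matrix.vecMulVec_apply, maxEnt, entVec, Pi.star_apply, Matrix.of_apply]
  by_cases h1 : i = j <;> by_cases h2 : k = l <;>
    simp [h1, h2, Complex.conj_ofReal, ← Complex.ofReal_mul,
      ← Real.sqrt_inv, Real.mul_self_sqrt (inv_nonneg.mpr hd.le), one_div]

lemma purifies_entVec [Nonempty n] :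
    Purifies (entVec n) ((((Fintype.card n : ℂ)))⁻¹ • (1 : Matrix n n ℂ)) := by
  rw [Purifies, vecMulVec_entVec]
  ext i j
  have h2 : ∀ a : n, (maxEnt n) (i, a) (j, a) =
      if i = a ∧ j = a then ((Fintype.card n : ℂ))⁻¹ else 0 := by
    intro a; simp [maxEnt, one_div]
  simp only [ptraceRight, Matrix.of_apply, Matrix.smul_apply, Matrix.one_apply, smul_eq_mul]
  rw [Finset.sum_congr rfl (fun a _ => h2 a)]
  by_cases h : i = j
  · subst h
    simp [Finset.sum_ite_eq]
  · have h3 : ∀ a : n, (if i = a ∧ j = a then ((Fintype.card n : ℂ))⁻¹ else 0) = 0 := by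
      intro a
      by_cases ha : i = a
      · subst ha; simp [Ne.symm h]
      · simp [ha]
    simp [h3, h]

lemma trace_maxEnt [Nonempty n] : (maxEnt n).trace = 1 := by
  have hd : ((Fintype.card n : ℂ)) ≠ 0 := by
    exact_mod_cast Nat.cast_ne_zero.mpr Fintype.card_ne_zero
  have h1 : ∀ i : n, ∑ a : n, (maxEnt n) (i, a) (i, a) = ((Fintype.card n : ℂ))⁻¹ := by
    intro i
    have h2 : ∀ a : n, (maxEnt n) (i, a) (i, a) =
        if i = a then ((Fintype.card n : ℂ))⁻¹ else 0 := by
      intro a; by_cases h : i = a <;> simp [maxEnt, h, one_div]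
    simp [h2, Finset.sum_ite_eq]
  rw [Matrix.trace, Fintype.sum_prod_type]
  simp only [Matrix.diag_apply]
  rw [Finset.sum_congr rfl (fun i _ => h1 i), Finset.sum_const, Finset.card_univ, nsmul_eq_mul]
  field_simp

lemma isDensity_pi [Nonempty n] :
    IsDensity ((((Fintype.card n : ℂ)))⁻¹ • (1 : Matrix n n ℂ)) := by
  have hd : ((Fintype.card n : ℂ)) ≠ 0 := by
    exact_mod_cast Nat.cast_ne_zero.mpr Fintype.card_ne_zero
  constructor
  · rw [Matrix.smul_one_eq_diagonal]
    refine Matrix.posSemidef_diagonal_iff.mpr fun i => ?_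
    have : ((Fintype.card n : ℂ))⁻¹ = (((Fintype.card n : ℝ))⁻¹ : ℂ) := by push_cast; ring
    rw [this]
    exact_mod_cast Complex.zero_le_real.mpr (by positivity)
  · rw [Matrix.trace_smul, Matrix.trace_one, smul_eq_mul]
    field_simp

end Aux3

/-- the capacities of the coding hierarchy are ordered:
`Q_I(Φ) = I(Φ) ≤ Q_II(Φ) = (log d + I(Φ))/2 ≤ Q_IV(Φ) = J(Φ)/2`. -/
theorem capacity_hierarchy {n : Type*} [Fintype n] [DecidableEq n] [Nonempty n]
    (Φ : QChannel n n) :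
    Ibar Φ ≤ (Real.log (Fintype.card n) + Ibar Φ) / 2 ∧
      (Real.log (Fintype.card n) + Ibar Φ) / 2 ≤
        (sSup {x : ℝ | ∃ (ρ : Matrix n n ℂ) (φ : n × n → ℂ),
            IsDensity ρ ∧ Purifies φ ρ ∧ x = vnEntropy ρ + cohInfo Φ ρ φ}) / 2 := by
  have hHapp : ∀ ρ : Matrix n n ℂ, IsDensity ρ →
      vnEntropy (Φ.app ρ) ≤ Real.log (Fintype.card n) := fun ρ hρ =>
    vnEntropy_le_log_card (posSemidef_app Φ hρ.1) (by rw [trace_app, hρ.2])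
  have hchoiPSD : (Φ.choi).PosSemidef := by
    rw [QChannel.choi, ← vecMulVec_entVec]
    exact posSemidef_tensorId Φ (posSemidef_vecMulVec _)
  have hchoiTr : (Φ.choi).trace = 1 := by
    rw [QChannel.choi, trace_tensorId, trace_maxEnt]
  have hIbar_le : Ibar Φ ≤ Real.log (Fintype.card n) := by
    have h1 := hHapp _ isDensity_pi
    have h2 := vnEntropy_nonneg hchoiPSD hchoiTr
    rw [Ibar]; linarith
  refine ⟨by linarith, ?_⟩
  have hmem : Real.log (Fintype.card n) + Ibar Φ ∈ {x : ℝ | ∃ (ρ : Matrix n n ℂ)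
      (φ : n × n → ℂ), IsDensity ρ ∧ Purifies φ ρ ∧ x = vnEntropy ρ + cohInfo Φ ρ φ} := by
    refine ⟨(((Fintype.card n : ℂ)))⁻¹ • 1, entVec n, isDensity_pi, purifies_entVec, ?_⟩
    have hcoh : cohInfo Φ ((((Fintype.card n : ℂ)))⁻¹ • 1) (entVec n) = Ibar Φ := by
      rw [cohInfo, vecMulVec_entVec, Ibar, QChannel.choi]
    rw [hcoh, vnEntropy_pi]
  have hbdd : BddAbove {x : ℝ | ∃ (ρ : Matrix n n ℂ)
      (φ : n × n → ℂ), IsDensity ρ ∧ Purifies φ ρ ∧ x = vnEntropy ρ + cohInfo Φ ρ φ} := by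
    refine ⟨2 * Real.log (Fintype.card n), ?_⟩
    rintro x ⟨ρ, φ, hρ, hφ, rfl⟩
    have hρle : vnEntropy ρ ≤ Real.log (Fintype.card n) := vnEntropy_le_log_card hρ.1 hρ.2
    have happ := hHapp ρ hρ
    have hM : (Matrix.vecMulVec φ (star φ)).PosSemidef := posSemidef_vecMulVec φ
    have hMtr : (Matrix.vecMulVec φ (star φ)).trace = 1 := by
      rw [← trace_ptraceRight]
      rw [Purifies] at hφ
      rw [hφ, hρ.2]
    have hT := vnEntropy_nonneg (posSemidef_tensorId Φ hM) (by rw [trace_tensorId, hMtr])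
    rw [cohInfo]
    linarith
  have hle := le_csSup hbdd hmem
  linarith

end
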